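/- arXiv:2305.10978 — 2 statements merged into one kernel-verified Lean document; each statement's English description precedes it below -/
import Mathlib

section
/- (Error bound with partial client participation.) Let C ⊆ {1,…,N} be the set of selected clients with normalized weights q'_m = q_m / ∑_{m∈C} q_m. Assume each selected client m computes V^t_m with ‖V^t_m − V^{π^t}_m‖_∞ ≤ δ_m and π^{t+1}_m with ‖T^{π^{t+1}_m}_m V^t_m − T_m V^t_m‖_∞ ≤ ε_m, and the global aggregation is π^{t+1} = ∑_{m∈C} q'_m π^{t+1}_m, V̄^t = ∑_{n=1}^N q_n V^t_n (over all clients with ‖V^t_n − V^{π^t}_n‖_∞ ≤ δ_n). Then ‖T^{π^{t+1}}_I V̄^t − T_I V̄^t‖_∞ ≤ ∑_{m∈C} ∑_{n=1}^N q'_m q_n (γ + γ²) R_max κ_{m,n}/(1−γ)² + ∑_{m∈C} q'_m γ R_max κ_{m,I}/(1−γ) + 2γ ∑_{m∈C} q'_m δ_m + 2γ δ̄ + ∑_{m∈C} q'_m ε_m, where δ̄ = ∑_n q_n δ_n. -/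
/-!
Since `T^π_I V` is affine in `π`, the gap `T^{π^{t+1}}_I V̄ - T_I V̄` of the aggregated policy is
the `q'`-average of the gaps of the client policies `π^{t+1}_m`, so it suffices to bound those.
For a client `m`, pass from `(P̄, V̄)` to `(P_m, V^t_m)`: changing the kernel costs
`γ κ_{m,I} ‖V̄‖` in `T^π` and `γ ∑ₙ qₙ κ_{m,n} ‖V̄‖` in `T`, changing the value costs
`γ ‖V^t_m - V̄‖` in each, and what is left is the client's own error `ε_m`. Finally
`‖V^t_m - V̄‖ ≤ δ_m + δ̄ + ∑ₙ qₙ ‖V^{π^t}_m - V^{π^t}_n‖`, and the fixed points of `T^π` for two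
kernels `P_m`, `P_n` differ by at most `γ κ_{m,n} R_max / (1 - γ)²`.
-/

open Finset Filter

variable {S A : Type*}

/-- A stochastic policy: for each state, a probability distribution over actions. -/
def IsPolicy [Fintype A] (pi : S → A → ℝ) : Prop :=
  (∀ s a, 0 ≤ pi s a) ∧ ∀ s, ∑ a, pi s a = 1

/-- A transition kernel: for each state-action pair, a probability distribution over states. -/
def IsKernel [Fintype S] (P : S → A → S → ℝ) : Prop :=
  (∀ s a s', 0 ≤ P s a s') ∧ ∀ s a, ∑ s', P s a s' = 1

/-- The policy Bellman operator `T^π` for kernel `P`. -/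
def Tpol [Fintype S] [Fintype A] (γ : ℝ) (R : S → A → ℝ) (P : S → A → S → ℝ)
    (pi : S → A → ℝ) (V : S → ℝ) (s : S) : ℝ :=
  ∑ a, pi s a * (R s a + γ * ∑ s', P s a s' * V s')

/-- The Bellman optimality operator `T` for kernel `P`. -/
noncomputable def Topt [Fintype S] [Fintype A] [Nonempty A] (γ : ℝ) (R : S → A → ℝ)
    (P : S → A → S → ℝ) (V : S → ℝ) (s : S) : ℝ :=
  Finset.univ.sup' Finset.univ_nonempty fun a => R s a + γ * ∑ s', P s a s' * V s'

/-- Heterogeneity measure `κ_{m,n}`: the supremum over policies `π` and states `s` of the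
ℓ¹-distance between the induced state transition kernels `P_m^π(·|s)` and `P_n^π(·|s)`. -/
noncomputable def kappa [Fintype S] [Fintype A] (Pm Pn : S → A → S → ℝ) : ℝ :=
  sSup {x : ℝ | ∃ pi : S → A → ℝ, ∃ s : S, IsPolicy pi ∧
    x = ∑ s', |(∑ a, pi s a * Pm s a s') - ∑ a, pi s a * Pn s a s'|}

/-- Sup-norm of a value function on a finite state space. -/
noncomputable def supNorm [Fintype S] [Nonempty S] (V : S → ℝ) : ℝ := ⨆ s, |V s|

theorem abs_sum_mul_le_sum_mul {ι : Type*} {s : Finset ι} {w f c : ι → ℝ}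
    (hw : ∀ i ∈ s, 0 ≤ w i) (hf : ∀ i ∈ s, |f i| ≤ c i) :
    |∑ i ∈ s, w i * f i| ≤ ∑ i ∈ s, w i * c i :=
  (abs_sum_le_sum_abs _ _).trans <| sum_le_sum fun i hi => by
    rw [abs_mul, abs_of_nonneg (hw i hi)]
    exact mul_le_mul_of_nonneg_left (hf i hi) (hw i hi)

theorem abs_sum_mul_le_of_sum_eq_one {ι : Type*} {s : Finset ι} {w f : ι → ℝ} {c : ℝ}
    (hw0 : ∀ i ∈ s, 0 ≤ w i) (hw1 : ∑ i ∈ s, w i = 1) (hf : ∀ i ∈ s, |f i| ≤ c) :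
    |∑ i ∈ s, w i * f i| ≤ c := by
  simpa only [← sum_mul, hw1, one_mul] using abs_sum_mul_le_sum_mul (c := fun _ => c) hw0 hf

theorem abs_sup'_sub_sup'_le {ι : Type*} {s : Finset ι} (hs : s.Nonempty) {f g : ι → ℝ} {c : ℝ}
    (h : ∀ i ∈ s, |f i - g i| ≤ c) : |s.sup' hs f - s.sup' hs g| ≤ c := by
  have key : ∀ f g : ι → ℝ, (∀ i ∈ s, f i - g i ≤ c) → s.sup' hs f - s.sup' hs g ≤ c :=
    fun f g h => sub_le_iff_le_add.2 <| sup'_le _ _ fun i hi =>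
      (sub_le_iff_le_add.1 (h i hi)).trans (add_le_add_right (le_sup' g hi) c)
  exact abs_sub_le_iff.2 ⟨key f g fun i hi => (abs_le.1 (h i hi)).2,
    key g f fun i hi => by linarith [(abs_le.1 (h i hi)).1]⟩

section SupNorm

variable [Fintype S] [Nonempty S]

theorem abs_le_supNorm (V : S → ℝ) (s : S) : |V s| ≤ supNorm V :=
  le_ciSup (f := fun s => |V s|) (Set.finite_range _).bddAbove s

theorem supNorm_le {V : S → ℝ} {c : ℝ} (h : ∀ s, |V s| ≤ c) : supNorm V ≤ c :=
  ciSup_le h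

theorem supNorm_nonneg (V : S → ℝ) : 0 ≤ supNorm V :=
  (abs_nonneg _).trans (abs_le_supNorm V (Classical.arbitrary S))

theorem abs_sum_mul_le_supNorm {p : S → ℝ} (hp0 : ∀ s, 0 ≤ p s) (hp1 : ∑ s, p s = 1)
    (f : S → ℝ) : |∑ s, p s * f s| ≤ supNorm f :=
  abs_sum_mul_le_of_sum_eq_one (fun s _ => hp0 s) hp1 fun s _ => abs_le_supNorm f s

theorem abs_sum_mul_le_sum_abs_mul_supNorm (d f : S → ℝ) :
    |∑ s, d s * f s| ≤ (∑ s, |d s|) * supNorm f :=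
  (abs_sum_le_sum_abs _ _).trans <| by
    rw [sum_mul]
    exact sum_le_sum fun s _ =>
      (abs_mul _ _).trans_le (mul_le_mul_of_nonneg_left (abs_le_supNorm f s) (abs_nonneg _))

end SupNorm

/-- The kernel `P^π` of the paper. -/
def polKernel [Fintype A] (P : S → A → S → ℝ) (pi : S → A → ℝ) (s s' : S) : ℝ :=
  ∑ a, pi s a * P s a s'

theorem isPolicy_single [Fintype A] [DecidableEq A] (a : A) :
    IsPolicy (fun _ : S => Pi.single a (1 : ℝ)) :=
  ⟨fun _ a' => by by_cases h : a' = a <;> simp [h], fun _ => by simp⟩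

theorem polKernel_single [Fintype A] [DecidableEq A] (P : S → A → S → ℝ) (a : A) (s s' : S) :
    polKernel P (fun _ => Pi.single a 1) s s' = P s a s' := by
  simp [polKernel, Pi.single_apply]

section PolicyKernel

variable [Fintype S] [Fintype A] {P : S → A → S → ℝ} {pi : S → A → ℝ}

theorem polKernel_nonneg (hP : IsKernel P) (hpi : IsPolicy pi) (s s' : S) :
    0 ≤ polKernel P pi s s' :=
  sum_nonneg fun a _ => mul_nonneg (hpi.1 s a) (hP.1 s a s')

theorem sum_polKernel (hP : IsKernel P) (hpi : IsPolicy pi) (s : S) :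
    ∑ s', polKernel P pi s s' = 1 := by
  simp only [polKernel]
  rw [sum_comm]
  simp only [← mul_sum, hP.2, mul_one, hpi.2]

theorem sum_polKernel_mul (P : S → A → S → ℝ) (pi : S → A → ℝ) (V : S → ℝ) (s : S) :
    ∑ s', polKernel P pi s s' * V s' = ∑ a, pi s a * ∑ s', P s a s' * V s' := by
  simp only [polKernel, sum_mul, mul_sum, mul_assoc]
  exact sum_comm

theorem Tpol_eq_add_polKernel (γ : ℝ) (R : S → A → ℝ) (P : S → A → S → ℝ) (pi : S → A → ℝ)
    (V : S → ℝ) (s : S) :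
    Tpol γ R P pi V s = ∑ a, pi s a * R s a + γ * ∑ s', polKernel P pi s s' * V s' := by
  simp only [Tpol, sum_polKernel_mul, mul_add, sum_add_distrib, mul_sum, mul_left_comm]

theorem Tpol_eq_sum_of_policy_eq_sum (γ : ℝ) (R : S → A → ℝ) (P : S → A → S → ℝ) {ι : Type*}
    {C : Finset ι} {w : ι → ℝ} {pis : ι → S → A → ℝ}
    (hpi : ∀ s a, pi s a = ∑ m ∈ C, w m * pis m s a) (V : S → ℝ) (s : S) :
    Tpol γ R P pi V s = ∑ m ∈ C, w m * Tpol γ R P (pis m) V s := by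
  simp only [Tpol, hpi, sum_mul, mul_sum, mul_assoc]
  exact sum_comm

end PolicyKernel

section Kappa

variable [Fintype S] [Fintype A] {Pm Pn : S → A → S → ℝ}

theorem sum_abs_polKernel_sub_le_kappa (hPm : IsKernel Pm) (hPn : IsKernel Pn)
    {pi : S → A → ℝ} (hpi : IsPolicy pi) (s : S) :
    ∑ s', |polKernel Pm pi s s' - polKernel Pn pi s s'| ≤ kappa Pm Pn := by
  refine le_csSup ⟨2, ?_⟩ ⟨pi, s, hpi, rfl⟩
  rintro x ⟨pi', s, hpi', rfl⟩
  calc ∑ s', |polKernel Pm pi' s s' - polKernel Pn pi' s s'|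
      ≤ ∑ s', (polKernel Pm pi' s s' + polKernel Pn pi' s s') :=
        sum_le_sum fun s' _ => (abs_sub _ _).trans_eq <| by
          rw [abs_of_nonneg (polKernel_nonneg hPm hpi' s s'),
            abs_of_nonneg (polKernel_nonneg hPn hpi' s s')]
    _ = 2 := by rw [sum_add_distrib, sum_polKernel hPm hpi', sum_polKernel hPn hpi']; norm_num

theorem kappa_nonneg [Nonempty S] [Nonempty A] (hPm : IsKernel Pm) (hPn : IsKernel Pn) :
    0 ≤ kappa Pm Pn := by
  classical
  exact (sum_nonneg fun _ _ => abs_nonneg _).trans <| sum_abs_polKernel_sub_le_kappa hPm hPn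
    (isPolicy_single (Classical.arbitrary A)) (Classical.arbitrary S)

theorem abs_sum_polKernel_sub_mul_le [Nonempty S] (hPm : IsKernel Pm) (hPn : IsKernel Pn)
    {pi : S → A → ℝ} (hpi : IsPolicy pi) (V : S → ℝ) (s : S) :
    |∑ s', polKernel Pm pi s s' * V s' - ∑ s', polKernel Pn pi s s' * V s'|
      ≤ kappa Pm Pn * supNorm V := by
  rw [← sum_sub_distrib]
  simp only [← sub_mul]
  exact (abs_sum_mul_le_sum_abs_mul_supNorm _ V).trans <| mul_le_mul_of_nonneg_right
    (sum_abs_polKernel_sub_le_kappa hPm hPn hpi s) (supNorm_nonneg V)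

theorem abs_sum_kernel_sub_mul_le [Nonempty S] (hPm : IsKernel Pm) (hPn : IsKernel Pn)
    (V : S → ℝ) (s : S) (a : A) :
    |∑ s', Pm s a s' * V s' - ∑ s', Pn s a s' * V s'| ≤ kappa Pm Pn * supNorm V := by
  classical
  simpa only [polKernel_single] using
    abs_sum_polKernel_sub_mul_le hPm hPn (isPolicy_single (S := S) a) V s

end Kappa

section Bellman

variable [Fintype S] [Fintype A] [Nonempty S] {γ : ℝ} (R : S → A → ℝ) {P : S → A → S → ℝ}

theorem abs_Tpol_sub_Tpol_le (hγ : 0 ≤ γ) (hP : IsKernel P) {pi : S → A → ℝ}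
    (hpi : IsPolicy pi) (V W : S → ℝ) (s : S) :
    |Tpol γ R P pi V s - Tpol γ R P pi W s| ≤ γ * supNorm (fun t => V t - W t) := by
  have h : Tpol γ R P pi V s - Tpol γ R P pi W s
      = γ * ∑ s', polKernel P pi s s' * (V s' - W s') := by
    simp only [Tpol_eq_add_polKernel, mul_sub, sum_sub_distrib]; ring
  rw [h, abs_mul, abs_of_nonneg hγ]
  exact mul_le_mul_of_nonneg_left
    (abs_sum_mul_le_supNorm (polKernel_nonneg hP hpi s) (sum_polKernel hP hpi s) _) hγ

theorem abs_Tpol_sub_Tpol_kernel_le (hγ : 0 ≤ γ) {Pm Pn : S → A → S → ℝ} (hPm : IsKernel Pm)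
    (hPn : IsKernel Pn) {pi : S → A → ℝ} (hpi : IsPolicy pi) (V : S → ℝ) (s : S) :
    |Tpol γ R Pm pi V s - Tpol γ R Pn pi V s| ≤ γ * (kappa Pm Pn * supNorm V) := by
  have h : Tpol γ R Pm pi V s - Tpol γ R Pn pi V s
      = γ * (∑ s', polKernel Pm pi s s' * V s' - ∑ s', polKernel Pn pi s s' * V s') := by
    simp only [Tpol_eq_add_polKernel]; ring
  rw [h, abs_mul, abs_of_nonneg hγ]
  exact mul_le_mul_of_nonneg_left (abs_sum_polKernel_sub_mul_le hPm hPn hpi V s) hγ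

theorem abs_Tpol_le {Rmax : ℝ} (hγ : 0 ≤ γ) {R : S → A → ℝ} (hR : ∀ s a, |R s a| ≤ Rmax)
    (hP : IsKernel P) {pi : S → A → ℝ} (hpi : IsPolicy pi) (V : S → ℝ) (s : S) :
    |Tpol γ R P pi V s| ≤ Rmax + γ * supNorm V := by
  rw [Tpol_eq_add_polKernel]
  refine (abs_add_le _ _).trans (add_le_add ?_ ?_)
  · exact abs_sum_mul_le_of_sum_eq_one (fun a _ => hpi.1 s a) (hpi.2 s) fun a _ => hR s a
  · rw [abs_mul, abs_of_nonneg hγ]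
    exact mul_le_mul_of_nonneg_left
      (abs_sum_mul_le_supNorm (polKernel_nonneg hP hpi s) (sum_polKernel hP hpi s) V) hγ

variable [Nonempty A]

theorem abs_Topt_sub_Topt_le (hγ : 0 ≤ γ) (hP : IsKernel P) (V W : S → ℝ) (s : S) :
    |Topt γ R P V s - Topt γ R P W s| ≤ γ * supNorm (fun t => V t - W t) := by
  refine abs_sup'_sub_sup'_le _ fun a _ => ?_
  have h : R s a + γ * ∑ s', P s a s' * V s' - (R s a + γ * ∑ s', P s a s' * W s')
      = γ * ∑ s', P s a s' * (V s' - W s') := by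
    simp only [mul_sub, sum_sub_distrib]; ring
  rw [h, abs_mul, abs_of_nonneg hγ]
  exact mul_le_mul_of_nonneg_left (abs_sum_mul_le_supNorm (hP.1 s a) (hP.2 s a) _) hγ

end Bellman

section Mixture

variable [Fintype S] {ι : Type*} [Fintype ι] {P : ι → S → A → S → ℝ} {q : ι → ℝ}
  {Pbar : S → A → S → ℝ}

theorem isKernel_mixture (hP : ∀ n, IsKernel (P n)) (hq0 : ∀ n, 0 ≤ q n) (hq1 : ∑ n, q n = 1)
    (hPbar : ∀ s a s', Pbar s a s' = ∑ n, q n * P n s a s') : IsKernel Pbar := by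
  refine ⟨fun s a s' => ?_, fun s a => ?_⟩
  · rw [hPbar]
    exact sum_nonneg fun n _ => mul_nonneg (hq0 n) ((hP n).1 s a s')
  · simp only [hPbar]
    rw [sum_comm]
    simp only [← mul_sum, (hP _).2, mul_one, hq1]

theorem abs_Topt_sub_Topt_mixture_le [Fintype A] [Nonempty S] [Nonempty A] {γ : ℝ} (hγ : 0 ≤ γ)
    (R : S → A → ℝ) (hP : ∀ n, IsKernel (P n)) (hq0 : ∀ n, 0 ≤ q n) (hq1 : ∑ n, q n = 1)
    (hPbar : ∀ s a s', Pbar s a s' = ∑ n, q n * P n s a s') (m : ι) (V : S → ℝ) (s : S) :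
    |Topt γ R (P m) V s - Topt γ R Pbar V s|
      ≤ γ * ((∑ n, q n * kappa (P m) (P n)) * supNorm V) := by
  refine abs_sup'_sub_sup'_le _ fun a _ => ?_
  have hbar : ∑ s', Pbar s a s' * V s' = ∑ n, q n * ∑ s', P n s a s' * V s' := by
    simp only [hPbar, sum_mul, mul_sum, mul_assoc]
    exact sum_comm
  have h : R s a + γ * ∑ s', P m s a s' * V s' - (R s a + γ * ∑ s', Pbar s a s' * V s')
      = γ * ∑ n, q n * (∑ s', P m s a s' * V s' - ∑ s', P n s a s' * V s') := by
    simp only [mul_sub, sum_sub_distrib, ← sum_mul, hq1, one_mul, hbar]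
    ring
  rw [h, abs_mul, abs_of_nonneg hγ, sum_mul]
  refine mul_le_mul_of_nonneg_left ?_ hγ
  simp only [mul_assoc]
  exact abs_sum_mul_le_sum_mul (fun n _ => hq0 n)
    fun n _ => abs_sum_kernel_sub_mul_le (hP m) (hP n) V s a

end Mixture

section Value

variable [Fintype S] [Fintype A] [Nonempty S] {γ Rmax : ℝ} {R : S → A → ℝ} {pi : S → A → ℝ}

theorem supNorm_le_of_fixed (hγ0 : 0 ≤ γ) (hγ1 : γ < 1) (hR : ∀ s a, |R s a| ≤ Rmax)
    {P : S → A → S → ℝ} (hP : IsKernel P) (hpi : IsPolicy pi) {V : S → ℝ}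
    (hV : ∀ s, V s = Tpol γ R P pi V s) : supNorm V ≤ Rmax / (1 - γ) := by
  have h : supNorm V ≤ Rmax + γ * supNorm V :=
    supNorm_le fun s => hV s ▸ abs_Tpol_le hγ0 hR hP hpi V s
  rw [le_div_iff₀ (by linarith)]
  linarith

theorem supNorm_sub_le_of_fixed [Nonempty A] (hγ0 : 0 ≤ γ) (hγ1 : γ < 1)
    (hR : ∀ s a, |R s a| ≤ Rmax) {Pm Pn : S → A → S → ℝ} (hPm : IsKernel Pm)
    (hPn : IsKernel Pn) (hpi : IsPolicy pi) {Vm Vn : S → ℝ}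
    (hVm : ∀ s, Vm s = Tpol γ R Pm pi Vm s) (hVn : ∀ s, Vn s = Tpol γ R Pn pi Vn s) :
    supNorm (fun s => Vm s - Vn s) ≤ γ * kappa Pm Pn * Rmax / (1 - γ) ^ 2 := by
  have hκ := kappa_nonneg hPm hPn
  have hVn_le := supNorm_le_of_fixed hγ0 hγ1 hR hPn hpi hVn
  have h : supNorm (fun s => Vm s - Vn s)
      ≤ γ * supNorm (fun s => Vm s - Vn s) + γ * (kappa Pm Pn * (Rmax / (1 - γ))) := by
    refine supNorm_le fun s => ?_
    rw [hVm s, hVn s]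
    refine (abs_sub_le _ (Tpol γ R Pm pi Vn s) _).trans (add_le_add
      (abs_Tpol_sub_Tpol_le R hγ0 hPm hpi Vm Vn s)
      ((abs_Tpol_sub_Tpol_kernel_le R hγ0 hPm hPn hpi Vn s).trans ?_))
    gcongr
  have h1γ : 0 < 1 - γ := by linarith
  have key : supNorm (fun s => Vm s - Vn s) * (1 - γ) ≤ γ * kappa Pm Pn * Rmax / (1 - γ) := by
    have : γ * (kappa Pm Pn * (Rmax / (1 - γ))) = γ * kappa Pm Pn * Rmax / (1 - γ) := by ring
    linarith
  rw [le_div_iff₀ h1γ] at key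
  rw [le_div_iff₀ (by positivity), sq, ← mul_assoc]
  exact key

end Value

section Federated

variable [Fintype S] [Nonempty S] {ι : Type*} [Fintype ι] {q : ι → ℝ}

theorem supNorm_mixture_le (hq0 : ∀ n, 0 ≤ q n) (hq1 : ∑ n, q n = 1) {Vs : ι → S → ℝ}
    {Vbar : S → ℝ} (hVbar : ∀ s, Vbar s = ∑ n, q n * Vs n s) {c : ℝ}
    (hVs : ∀ n, supNorm (Vs n) ≤ c) : supNorm Vbar ≤ c :=
  supNorm_le fun s => hVbar s ▸ abs_sum_mul_le_of_sum_eq_one (fun n _ => hq0 n) hq1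
    fun n _ => (abs_le_supNorm _ s).trans (hVs n)

theorem supNorm_sub_mixture_le (hq0 : ∀ n, 0 ≤ q n) (hq1 : ∑ n, q n = 1) {Vt Vpi : ι → S → ℝ}
    {Vbar : S → ℝ} (hVbar : ∀ s, Vbar s = ∑ n, q n * Vt n s) {δ : ι → ℝ}
    (hδ : ∀ n, supNorm (fun s => Vt n s - Vpi n s) ≤ δ n) (m : ι) {d : ι → ℝ}
    (hd : ∀ n, supNorm (fun s => Vpi m s - Vpi n s) ≤ d n) :
    supNorm (fun s => Vt m s - Vbar s) ≤ δ m + ∑ n, q n * δ n + ∑ n, q n * d n := by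
  refine supNorm_le fun s => ?_
  have hsplit : Vt m s - Vbar s = ∑ n, q n * (Vt m s - Vt n s) := by
    simp only [hVbar, mul_sub, sum_sub_distrib, ← sum_mul, hq1, one_mul]
  have hpair : ∀ n, |Vt m s - Vt n s| ≤ δ m + d n + δ n := fun n => by
    have hm : |Vt m s - Vpi m s| ≤ δ m :=
      (abs_le_supNorm (fun s => Vt m s - Vpi m s) s).trans (hδ m)
    have hn : |Vt n s - Vpi n s| ≤ δ n :=
      (abs_le_supNorm (fun s => Vt n s - Vpi n s) s).trans (hδ n)
    have hmn : |Vpi m s - Vpi n s| ≤ d n :=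
      (abs_le_supNorm (fun s => Vpi m s - Vpi n s) s).trans (hd n)
    rw [abs_le] at hm hn hmn ⊢
    constructor <;> linarith
  rw [hsplit]
  refine (abs_sum_mul_le_sum_mul (fun n _ => hq0 n) fun n _ => hpair n).trans_eq ?_
  simp only [mul_add, sum_add_distrib, ← sum_mul, hq1, one_mul]
  ring

variable [Fintype A] [Nonempty A] {P : ι → S → A → S → ℝ} {Pbar : S → A → S → ℝ}

theorem abs_Tpol_sub_Topt_mixture_le {γ : ℝ} (hγ : 0 ≤ γ) (R : S → A → ℝ)
    (hP : ∀ n, IsKernel (P n)) (hq0 : ∀ n, 0 ≤ q n) (hq1 : ∑ n, q n = 1)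
    (hPbar : ∀ s a s', Pbar s a s' = ∑ n, q n * P n s a s') (m : ι) {pi : S → A → ℝ}
    (hpi : IsPolicy pi) (V W : S → ℝ) (s : S) :
    |Tpol γ R Pbar pi V s - Topt γ R Pbar V s|
      ≤ |Tpol γ R (P m) pi W s - Topt γ R (P m) W s| + 2 * γ * supNorm (fun t => W t - V t)
        + γ * (kappa (P m) Pbar + ∑ n, q n * kappa (P m) (P n)) * supNorm V := by
  have hPbarK := isKernel_mixture hP hq0 hq1 hPbar
  have h₁ : |Tpol γ R Pbar pi V s - Tpol γ R (P m) pi V s| ≤ γ * (kappa (P m) Pbar * supNorm V) :=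
    abs_sub_comm (Tpol γ R Pbar pi V s) _ ▸
      abs_Tpol_sub_Tpol_kernel_le R hγ (hP m) hPbarK hpi V s
  have h₂ : |Tpol γ R (P m) pi V s - Tpol γ R (P m) pi W s| ≤ γ * supNorm (fun t => W t - V t) :=
    abs_sub_comm (Tpol γ R (P m) pi V s) _ ▸ abs_Tpol_sub_Tpol_le R hγ (hP m) hpi W V s
  have h₃ : |Topt γ R (P m) W s - Topt γ R (P m) V s| ≤ γ * supNorm (fun t => W t - V t) :=
    abs_Topt_sub_Topt_le R hγ (hP m) W V s
  have h₄ := abs_Topt_sub_Topt_mixture_le hγ R hP hq0 hq1 hPbar m V s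
  have t₁ := abs_sub_le (Tpol γ R Pbar pi V s) (Tpol γ R (P m) pi V s) (Topt γ R Pbar V s)
  have t₂ := abs_sub_le (Tpol γ R (P m) pi V s) (Tpol γ R (P m) pi W s) (Topt γ R Pbar V s)
  have t₃ := abs_sub_le (Tpol γ R (P m) pi W s) (Topt γ R (P m) W s) (Topt γ R Pbar V s)
  have t₄ := abs_sub_le (Topt γ R (P m) W s) (Topt γ R (P m) V s) (Topt γ R Pbar V s)
  linarith

theorem supNorm_Tpol_sub_Topt_mixture_le {γ Rmax : ℝ} (hγ0 : 0 ≤ γ) (hγ1 : γ < 1)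
    {R : S → A → ℝ} (hR : ∀ s a, |R s a| ≤ Rmax) (hP : ∀ n, IsKernel (P n))
    (hq0 : ∀ n, 0 ≤ q n) (hq1 : ∑ n, q n = 1)
    (hPbar : ∀ s a s', Pbar s a s' = ∑ n, q n * P n s a s') {pit : S → A → ℝ}
    (hpit : IsPolicy pit) {Vpi Vt : ι → S → ℝ}
    (hVpi : ∀ n s, Vpi n s = Tpol γ R (P n) pit (Vpi n) s)
    {δ : ι → ℝ} (hδ : ∀ n, supNorm (fun s => Vt n s - Vpi n s) ≤ δ n)
    (hVt : ∀ n, supNorm (Vt n) ≤ Rmax / (1 - γ)) {Vbar : S → ℝ}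
    (hVbar : ∀ s, Vbar s = ∑ n, q n * Vt n s) (m : ι) {pi : S → A → ℝ} (hpi : IsPolicy pi)
    {ε : ℝ} (hε : supNorm (fun s => Tpol γ R (P m) pi (Vt m) s - Topt γ R (P m) (Vt m) s) ≤ ε) :
    supNorm (fun s => Tpol γ R Pbar pi Vbar s - Topt γ R Pbar Vbar s)
      ≤ ∑ n, q n * ((γ + γ ^ 2) * Rmax * kappa (P m) (P n) / (1 - γ) ^ 2)
        + γ * Rmax * kappa (P m) Pbar / (1 - γ) + 2 * γ * δ m + 2 * γ * ∑ n, q n * δ n + ε := by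
  have h1γ : 0 < 1 - γ := by linarith
  have hκ : 0 ≤ kappa (P m) Pbar + ∑ n, q n * kappa (P m) (P n) :=
    add_nonneg (kappa_nonneg (hP m) (isKernel_mixture hP hq0 hq1 hPbar))
      (sum_nonneg fun n _ => mul_nonneg (hq0 n) (kappa_nonneg (hP m) (hP n)))
  have hV := mul_le_mul_of_nonneg_left (supNorm_mixture_le hq0 hq1 hVbar hVt) (mul_nonneg hγ0 hκ)
  have hW := mul_le_mul_of_nonneg_left (supNorm_sub_mixture_le hq0 hq1 hVbar hδ m fun n =>
    supNorm_sub_le_of_fixed hγ0 hγ1 hR (hP m) (hP n) hpit (hVpi m) (hVpi n))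
    (by positivity : (0 : ℝ) ≤ 2 * γ)
  -- `2γ · γ / (1 - γ)² + γ / (1 - γ) = (γ + γ²) / (1 - γ)²`
  have hsplit : ∑ n, q n * ((γ + γ ^ 2) * Rmax * kappa (P m) (P n) / (1 - γ) ^ 2)
      = 2 * γ * ∑ n, q n * (γ * kappa (P m) (P n) * Rmax / (1 - γ) ^ 2)
        + γ * (∑ n, q n * kappa (P m) (P n)) * (Rmax / (1 - γ)) := by
    simp only [mul_sum, sum_mul, ← sum_add_distrib]
    exact sum_congr rfl fun n _ => by field_simp; ring
  have hexpand : γ * (kappa (P m) Pbar + ∑ n, q n * kappa (P m) (P n)) * (Rmax / (1 - γ))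
      = γ * Rmax * kappa (P m) Pbar / (1 - γ)
        + γ * (∑ n, q n * kappa (P m) (P n)) * (Rmax / (1 - γ)) := by
    ring
  refine supNorm_le fun s => ?_
  have hgap := abs_Tpol_sub_Topt_mixture_le hγ0 R hP hq0 hq1 hPbar m hpi Vbar (Vt m) s
  have hε_s := (abs_le_supNorm _ s).trans hε
  rw [hsplit]
  linarith

end Federated

variable [Fintype S] [Fintype A] [Nonempty S] [Nonempty A]

theorem stmt10 (N : ℕ) (γ Rmax : ℝ) (hγ0 : 0 < γ) (hγ1 : γ < 1)
    (R : S → A → ℝ) (hR : ∀ s a, 0 ≤ R s a ∧ R s a ≤ Rmax)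
    (q : Fin N → ℝ) (hq0 : ∀ n, 0 ≤ q n) (hq1 : ∑ n, q n = 1)
    (P : Fin N → S → A → S → ℝ) (hP : ∀ n, IsKernel (P n))
    (Pbar : S → A → S → ℝ) (hPbar : ∀ s a s', Pbar s a s' = ∑ j, q j * P j s a s')
    (C : Finset (Fin N)) (hC : 0 < ∑ m ∈ C, q m)
    (pit : S → A → ℝ) (hpit : IsPolicy pit)
    (Vpi : Fin N → S → ℝ) (hVpi : ∀ n s, Vpi n s = Tpol γ R (P n) pit (Vpi n) s)
    (Vt : Fin N → S → ℝ) (δ : Fin N → ℝ)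
    (hδ : ∀ n, supNorm (fun s => Vt n s - Vpi n s) ≤ δ n)
    (hVt : ∀ n, supNorm (Vt n) ≤ Rmax / (1 - γ))
    (pinext : Fin N → S → A → ℝ) (hpinext : ∀ n, IsPolicy (pinext n))
    (ε : Fin N → ℝ)
    (hε : ∀ m ∈ C, supNorm (fun s => Tpol γ R (P m) (pinext m) (Vt m) s - Topt γ R (P m) (Vt m) s) ≤ ε m)
    (Vbar : S → ℝ) (hVbar : ∀ s, Vbar s = ∑ n, q n * Vt n s)
    (piagg : S → A → ℝ)
    (hpiagg : ∀ s a, piagg s a = ∑ m ∈ C, (q m / ∑ k ∈ C, q k) * pinext m s a) :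
    supNorm (fun s => Tpol γ R Pbar piagg Vbar s - Topt γ R Pbar Vbar s) ≤
      (∑ m ∈ C, ∑ n, (q m / ∑ k ∈ C, q k) * q n *
          ((γ + γ ^ 2) * Rmax * kappa (P m) (P n) / (1 - γ) ^ 2)) +
        (∑ m ∈ C, (q m / ∑ k ∈ C, q k) * (γ * Rmax * kappa (P m) Pbar / (1 - γ))) +
        2 * γ * (∑ m ∈ C, (q m / ∑ k ∈ C, q k) * δ m) +
        2 * γ * (∑ n, q n * δ n) +
        ∑ m ∈ C, (q m / ∑ k ∈ C, q k) * ε m := by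
  have hRabs : ∀ s a, |R s a| ≤ Rmax := fun s a => by
    rw [abs_of_nonneg (hR s a).1]
    exact (hR s a).2
  have hclient m (hm : m ∈ C) := supNorm_Tpol_sub_Topt_mixture_le hγ0.le hγ1 hRabs hP hq0 hq1
    hPbar hpit hVpi hδ hVt hVbar m (hpinext m) (hε m hm)
  have hw0 : ∀ m ∈ C, 0 ≤ q m / ∑ k ∈ C, q k := fun m _ => div_nonneg (hq0 m) hC.le
  have hw1 : ∑ m ∈ C, q m / ∑ k ∈ C, q k = 1 := by rw [← sum_div, div_self hC.ne']
  refine supNorm_le fun s => ?_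
  calc |Tpol γ R Pbar piagg Vbar s - Topt γ R Pbar Vbar s|
      = |∑ m ∈ C, (q m / ∑ k ∈ C, q k)
          * (Tpol γ R Pbar (pinext m) Vbar s - Topt γ R Pbar Vbar s)| := by
        simp only [Tpol_eq_sum_of_policy_eq_sum γ R Pbar hpiagg, mul_sub, sum_sub_distrib,
          ← sum_mul, hw1, one_mul]
    _ ≤ _ := abs_sum_mul_le_sum_mul hw0 fun m hm => (abs_le_supNorm _ s).trans (hclient m hm)
    _ = _ := by
        simp only [mul_add, sum_add_distrib]
        rw [← sum_mul _ _ (2 * γ * _), hw1, one_mul]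
        simp only [mul_sum, mul_assoc, mul_left_comm]
end

section
/- For any state s such that V̄^{π*}(s) ≥ V̄^{π*_I}(s), the value function of the imaginary MDP's optimal policy satisfies |V^{π*_I}_I(s) − V̄^{π*}(s)| ≤ γ R_max κ_1 / (1−γ)², where π* maximizes η(π) = E_{s₀∼μ}[V̄^π(s₀)] pointwise-average value, π*_I is the optimal policy of the imaginary MDP, V^π_I is the value in the imaginary MDP, and V̄^π = ∑_n q_n V^π_n. -/
open Finset Filter

variable {S A : Type*}

variable [Fintype S] [Fintype A] [Nonempty S] [Nonempty A]


/-!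
Write `V^π_I` for the value of `π` in the imaginary MDP. For a fixed policy `π` the Bellman
equations give `V^π_n − V^π_I = γ P_n^π (V^π_n − V^π_I) + γ (P_n^π − P̄^π) V^π_I`; the rows of
`P_n^π − P̄^π` have ℓ¹-norm at most `κ_{n,I}` and `‖V^π_I‖_∞ ≤ R_max/(1−γ)`, so evaluating at a
state where `|V^π_n − V^π_I|` is maximal yields the simulation bound
`|V^π_n − V^π_I| ≤ γ R_max κ_{n,I}/(1−γ)²`. Averaging with the weights `q_n`, this bounds
`|V̄^π − V^π_I|` by `ε = γ R_max κ_1/(1−γ)²`. Then `V*_I(s) ≥ V^{π*}_I(s) ≥ V̄^{π*}(s) − ε` from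
below, and `V*_I(s) ≤ V̄^{π*_I}(s) + ε ≤ V̄^{π*}(s) + ε` from above by the hypothesis on `s`.
-/

open Finset

section WeightedSums

variable {ι : Type*} [Fintype ι] {w x : ι → ℝ}

lemma weighted_sum_le {c : ℝ} (hw0 : ∀ i, 0 ≤ w i) (hw1 : ∑ i, w i = 1)
    (hx : ∀ i, x i ≤ c) : ∑ i, w i * x i ≤ c :=
  calc ∑ i, w i * x i ≤ ∑ i, w i * c :=
        sum_le_sum fun i _ => mul_le_mul_of_nonneg_left (hx i) (hw0 i)
    _ = c := by rw [← sum_mul, hw1, one_mul]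

lemma abs_weighted_sum_le_weighted_sum_abs (hw0 : ∀ i, 0 ≤ w i) :
    |∑ i, w i * x i| ≤ ∑ i, w i * |x i| :=
  (abs_sum_le_sum_abs _ _).trans_eq <|
    sum_congr rfl fun i _ => by rw [abs_mul, abs_of_nonneg (hw0 i)]

lemma abs_weighted_sum_le {c : ℝ} (hw0 : ∀ i, 0 ≤ w i) (hw1 : ∑ i, w i = 1)
    (hx : ∀ i, |x i| ≤ c) : |∑ i, w i * x i| ≤ c :=
  (abs_weighted_sum_le_weighted_sum_abs hw0).trans (weighted_sum_le hw0 hw1 hx)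

lemma abs_weighted_sum_sub_le {y : ℝ} {b : ι → ℝ} (hw0 : ∀ i, 0 ≤ w i)
    (hw1 : ∑ i, w i = 1) (h : ∀ i, |x i - y| ≤ b i) :
    |∑ i, w i * x i - y| ≤ ∑ i, w i * b i := by
  have hsub : ∑ i, w i * x i - y = ∑ i, w i * (x i - y) := by
    simp only [mul_sub, sum_sub_distrib, ← sum_mul, hw1, one_mul]
  rw [hsub]
  exact (abs_weighted_sum_le_weighted_sum_abs hw0).trans
    (sum_le_sum fun i _ => mul_le_mul_of_nonneg_left (h i) (hw0 i))

lemma sum_abs_sub_le_two {p p' : ι → ℝ} (hp0 : ∀ i, 0 ≤ p i) (hp1 : ∑ i, p i = 1)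
    (hp0' : ∀ i, 0 ≤ p' i) (hp1' : ∑ i, p' i = 1) : ∑ i, |p i - p' i| ≤ 2 :=
  calc ∑ i, |p i - p' i| ≤ ∑ i, (p i + p' i) := sum_le_sum fun i _ => by
        simpa only [abs_of_nonneg (hp0 i), abs_of_nonneg (hp0' i)] using abs_sub (p i) (p' i)
    _ = 2 := by rw [sum_add_distrib, hp1, hp1']; norm_num

end WeightedSums

/-- The maximum of `f` is attained on a finite type, so it suffices to check the bound there. -/
lemma le_div_one_sub_of_forall_le_add_mul {ι : Type*} [Finite ι] {f : ι → ℝ} {c γ : ℝ}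
    (hγ : γ < 1) (h : ∀ i M, (∀ j, f j ≤ M) → f i ≤ c + γ * M) (i : ι) :
    f i ≤ c / (1 - γ) := by
  have : Nonempty ι := ⟨i⟩
  obtain ⟨i₀, hi₀⟩ := Finite.exists_max f
  have hmax : f i₀ ≤ c / (1 - γ) := by
    rw [le_div_iff₀ (sub_pos.2 hγ)]
    linarith [h i₀ (f i₀) hi₀]
  exact (hi₀ i).trans hmax

section MDP

omit [Nonempty S] [Nonempty A]

variable {γ : ℝ} {R : S → A → ℝ} {P P₁ P₂ : S → A → S → ℝ} {pi : S → A → ℝ}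

/-- The state-to-state kernel `P^π(s'|s) = ∑ₐ π(a|s) P(s'|s,a)`. -/
def stateKernel (P : S → A → S → ℝ) (pi : S → A → ℝ) (s s' : S) : ℝ :=
  ∑ a, pi s a * P s a s'

lemma stateKernel_nonneg (hP : IsKernel P) (hpi : IsPolicy pi) (s s' : S) :
    0 ≤ stateKernel P pi s s' :=
  sum_nonneg fun a _ => mul_nonneg (hpi.1 s a) (hP.1 s a s')

lemma sum_stateKernel (hP : IsKernel P) (hpi : IsPolicy pi) (s : S) :
    ∑ s', stateKernel P pi s s' = 1 := by
  simp only [stateKernel]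
  rw [sum_comm]
  simp only [← mul_sum, hP.2 s, mul_one, hpi.2 s]

omit [Fintype A] in
lemma isKernel_mixture_s15 {ι : Type*} [Fintype ι] {q : ι → ℝ} {Q : ι → S → A → S → ℝ}
    (hq0 : ∀ n, 0 ≤ q n) (hq1 : ∑ n, q n = 1) (hQ : ∀ n, IsKernel (Q n)) :
    IsKernel fun s a s' => ∑ n, q n * Q n s a s' := by
  refine ⟨fun s a s' => sum_nonneg fun n _ => mul_nonneg (hq0 n) ((hQ n).1 s a s'),
    fun s a => ?_⟩
  rw [sum_comm]
  simp only [← mul_sum, (hQ _).2 s a, mul_one, hq1]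

lemma Tpol_eq (V : S → ℝ) (s : S) :
    Tpol γ R P pi V s = ∑ a, pi s a * R s a + γ * ∑ s', stateKernel P pi s s' * V s' := by
  simp only [Tpol, stateKernel, mul_add, sum_add_distrib, mul_sum, sum_mul]
  rw [sum_comm (s := univ) (t := univ)]
  congr 1
  exact sum_congr rfl fun a _ => sum_congr rfl fun s' _ => by ring

lemma Tpol_sub_Tpol (V V' : S → ℝ) (s : S) :
    Tpol γ R P pi V s - Tpol γ R P pi V' s =
      γ * ∑ s', stateKernel P pi s s' * (V s' - V' s') := by
  simp only [Tpol_eq, mul_sub, sum_sub_distrib]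
  ring

lemma Tpol_sub_Tpol_of_kernel (W U : S → ℝ) (s : S) :
    Tpol γ R P₁ pi W s - Tpol γ R P₂ pi U s =
      γ * (∑ s', stateKernel P₁ pi s s' * (W s' - U s') +
        ∑ s', (stateKernel P₁ pi s s' - stateKernel P₂ pi s s') * U s') := by
  simp only [Tpol_eq, mul_sub, sub_mul, sum_sub_distrib]
  ring

lemma sum_abs_stateKernel_sub_le_kappa (hP₁ : IsKernel P₁) (hP₂ : IsKernel P₂)
    (hpi : IsPolicy pi) (s : S) :
    ∑ s', |stateKernel P₁ pi s s' - stateKernel P₂ pi s s'| ≤ kappa P₁ P₂ := by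
  refine le_csSup ⟨2, ?_⟩ ⟨pi, s, hpi, rfl⟩
  rintro x ⟨pi', s₀, hpi', rfl⟩
  exact sum_abs_sub_le_two (stateKernel_nonneg hP₁ hpi' s₀) (sum_stateKernel hP₁ hpi' s₀)
    (stateKernel_nonneg hP₂ hpi' s₀) (sum_stateKernel hP₂ hpi' s₀)

lemma abs_le_of_eq_Tpol {Rmax : ℝ} {V : S → ℝ} (hγ0 : 0 ≤ γ) (hγ1 : γ < 1)
    (hR : ∀ s a, |R s a| ≤ Rmax) (hP : IsKernel P) (hpi : IsPolicy pi)
    (hV : ∀ s, V s = Tpol γ R P pi V s) (s : S) : |V s| ≤ Rmax / (1 - γ) := by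
  refine le_div_one_sub_of_forall_le_add_mul (f := fun s => |V s|) hγ1 (fun t M hM => ?_) s
  rw [hV t, Tpol_eq]
  calc |∑ a, pi t a * R t a + γ * ∑ s', stateKernel P pi t s' * V s'|
      ≤ |∑ a, pi t a * R t a| + γ * |∑ s', stateKernel P pi t s' * V s'| :=
        (abs_add_le _ _).trans_eq (by rw [abs_mul, abs_of_nonneg hγ0])
    _ ≤ Rmax + γ * M := by
        gcongr
        · exact abs_weighted_sum_le (hpi.1 t) (hpi.2 t) (hR t)
        · exact abs_weighted_sum_le (stateKernel_nonneg hP hpi t) (sum_stateKernel hP hpi t) hM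

/-- The simulation lemma. -/
lemma abs_sub_le_of_eq_Tpol {Rmax : ℝ} {W U : S → ℝ} (hγ0 : 0 ≤ γ) (hγ1 : γ < 1)
    (hR : ∀ s a, |R s a| ≤ Rmax) (hP₁ : IsKernel P₁) (hP₂ : IsKernel P₂) (hpi : IsPolicy pi)
    (hW : ∀ s, W s = Tpol γ R P₁ pi W s) (hU : ∀ s, U s = Tpol γ R P₂ pi U s) (s : S) :
    |W s - U s| ≤ γ * Rmax * kappa P₁ P₂ / (1 - γ) ^ 2 := by
  set B := Rmax / (1 - γ) with hBdef
  have hUB : ∀ s, |U s| ≤ B := abs_le_of_eq_Tpol hγ0 hγ1 hR hP₂ hpi hU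
  have hB : 0 ≤ B := (abs_nonneg _).trans (hUB s)
  have hdiff : ∀ t, |∑ s', (stateKernel P₁ pi t s' - stateKernel P₂ pi t s') * U s'| ≤
      kappa P₁ P₂ * B := fun t =>
    calc _ ≤ ∑ s', |stateKernel P₁ pi t s' - stateKernel P₂ pi t s'| * B :=
          (abs_sum_le_sum_abs _ _).trans <| sum_le_sum fun s' _ => by
            rw [abs_mul]; exact mul_le_mul_of_nonneg_left (hUB s') (abs_nonneg _)
      _ ≤ kappa P₁ P₂ * B := by
          rw [← sum_mul]
          exact mul_le_mul_of_nonneg_right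
            (sum_abs_stateKernel_sub_le_kappa hP₁ hP₂ hpi t) hB
  have key : |W s - U s| ≤ γ * (kappa P₁ P₂ * B) / (1 - γ) := by
    refine le_div_one_sub_of_forall_le_add_mul (f := fun s => |W s - U s|) hγ1
      (fun t M hM => ?_) s
    have hmean := abs_weighted_sum_le (stateKernel_nonneg hP₁ hpi t) (sum_stateKernel hP₁ hpi t) hM
    rw [hW t, hU t, Tpol_sub_Tpol_of_kernel, abs_mul, abs_of_nonneg hγ0, ← mul_add]
    gcongr
    exact (abs_add_le _ _).trans (by linarith [hdiff t])
  calc |W s - U s| ≤ γ * (kappa P₁ P₂ * B) / (1 - γ) := key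
    _ = γ * Rmax * kappa P₁ P₂ / (1 - γ) ^ 2 := by rw [hBdef, sq, ← div_div]; ring

lemma exists_eq_Tpol (hγ0 : 0 ≤ γ) (hγ1 : γ < 1) (hP : IsKernel P) (hpi : IsPolicy pi) :
    ∃ V : S → ℝ, ∀ s, V s = Tpol γ R P pi V s := by
  have hcontr : ContractingWith γ.toNNReal fun V s => Tpol γ R P pi V s := by
    refine ⟨by simpa [← NNReal.coe_lt_coe, Real.coe_toNNReal γ hγ0] using hγ1,
      LipschitzWith.of_dist_le_mul fun V V' => ?_⟩
    rw [Real.coe_toNNReal γ hγ0, dist_pi_le_iff (mul_nonneg hγ0 dist_nonneg)]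
    intro s
    rw [Real.dist_eq, Tpol_sub_Tpol, abs_mul, abs_of_nonneg hγ0]
    gcongr
    refine abs_weighted_sum_le (stateKernel_nonneg hP hpi s) (sum_stateKernel hP hpi s)
      fun s' => ?_
    rw [← Real.dist_eq]
    exact dist_le_pi_dist V V' s'
  exact ⟨_, fun s => (congrFun hcontr.fixedPoint_isFixedPt s).symm⟩

end MDP

omit [Nonempty S] in
lemma Tpol_le_Topt {γ : ℝ} {R : S → A → ℝ} {P : S → A → S → ℝ} {pi : S → A → ℝ}
    (hpi : IsPolicy pi) (V : S → ℝ) (s : S) : Tpol γ R P pi V s ≤ Topt γ R P V s :=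
  weighted_sum_le (hpi.1 s) (hpi.2 s) fun a =>
    le_sup' (fun a => R s a + γ * ∑ s', P s a s' * V s') (mem_univ a)

omit [Nonempty S] in
lemma le_of_eq_Tpol_of_eq_Topt {γ : ℝ} {R : S → A → ℝ} {P : S → A → S → ℝ}
    {pi : S → A → ℝ} {U V : S → ℝ} (hγ0 : 0 ≤ γ) (hγ1 : γ < 1) (hP : IsKernel P)
    (hpi : IsPolicy pi) (hU : ∀ s, U s = Tpol γ R P pi U s)
    (hV : ∀ s, V s = Topt γ R P V s) (s : S) : U s ≤ V s := by
  have key : U s - V s ≤ 0 / (1 - γ) := by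
    refine le_div_one_sub_of_forall_le_add_mul (f := fun s => U s - V s) hγ1
      (fun t M hM => ?_) s
    calc U t - V t ≤ Tpol γ R P pi U t - Tpol γ R P pi V t := by
          linarith [hU t, hV t, Tpol_le_Topt (R := R) (P := P) (γ := γ) hpi V t]
      _ = γ * ∑ s', stateKernel P pi t s' * (U s' - V s') := Tpol_sub_Tpol U V t
      _ ≤ 0 + γ * M := by
          rw [zero_add]
          exact mul_le_mul_of_nonneg_left
            (weighted_sum_le (stateKernel_nonneg hP hpi t) (sum_stateKernel hP hpi t) hM) hγ0
  simpa [sub_nonpos] using key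

theorem stmt15_general (N : ℕ) (γ Rmax : ℝ) (hγ0 : 0 < γ) (hγ1 : γ < 1)
    (R : S → A → ℝ) (hR : ∀ s a, 0 ≤ R s a ∧ R s a ≤ Rmax)
    (q : Fin N → ℝ) (hq0 : ∀ n, 0 ≤ q n) (hq1 : ∑ n, q n = 1)
    (P : Fin N → S → A → S → ℝ) (hP : ∀ n, IsKernel (P n))
    (Pbar : S → A → S → ℝ) (hPbar : ∀ s a s', Pbar s a s' = ∑ j, q j * P j s a s')
    -- π*, the optimal policy for the FRL objective η(π) = E_{s₀∼μ}[V̄^π(s₀)]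
    (pistar : S → A → ℝ) (hpistar : IsPolicy pistar)
    (Vstarn : Fin N → S → ℝ)
    (hVstarn : ∀ n s, Vstarn n s = Tpol γ R (P n) pistar (Vstarn n) s)
    -- π*_I, the optimal policy of the imaginary MDP
    (pistarI : S → A → ℝ) (hpistarI : IsPolicy pistarI)
    (VIstar : S → ℝ) (hVIstar : ∀ s, VIstar s = Tpol γ R Pbar pistarI VIstar s)
    (hVIstarOpt : ∀ s, VIstar s = Topt γ R Pbar VIstar s)
    (VstarIn : Fin N → S → ℝ)
    (hVstarIn : ∀ n s, VstarIn n s = Tpol γ R (P n) pistarI (VstarIn n) s)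
    (s : S) (hs : ∑ n, q n * VstarIn n s ≤ ∑ n, q n * Vstarn n s) :
    |VIstar s - ∑ n, q n * Vstarn n s| ≤
      γ * Rmax * (∑ n, q n * kappa (P n) Pbar) / (1 - γ) ^ 2 := by
  have hPbarK : IsKernel Pbar := by
    have hmix : Pbar = fun s a s' => ∑ j, q j * P j s a s' := by
      funext s a s'; exact hPbar s a s'
    exact hmix ▸ isKernel_mixture_s15 hq0 hq1 hP
  have hRabs : ∀ s a, |R s a| ≤ Rmax := fun s a =>
    abs_le.2 ⟨by linarith [hR s a], (hR s a).2⟩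
  -- `VI` is the value of `π*` in the imaginary MDP
  obtain ⟨VI, hVI⟩ := exists_eq_Tpol (R := R) hγ0.le hγ1 hPbarK hpistar
  have hsim := abs_weighted_sum_sub_le hq0 hq1 fun n =>
    abs_sub_le_of_eq_Tpol hγ0.le hγ1 hRabs (hP n) hPbarK hpistar (hVstarn n) hVI s
  have hsimI := abs_weighted_sum_sub_le hq0 hq1 fun n =>
    abs_sub_le_of_eq_Tpol hγ0.le hγ1 hRabs (hP n) hPbarK hpistarI (hVstarIn n) hVIstar s
  have hVI_le : VI s ≤ VIstar s :=
    le_of_eq_Tpol_of_eq_Topt hγ0.le hγ1 hPbarK hpistar hVI hVIstarOpt s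
  have hbound : ∑ n, q n * (γ * Rmax * kappa (P n) Pbar / (1 - γ) ^ 2) =
      γ * Rmax * (∑ n, q n * kappa (P n) Pbar) / (1 - γ) ^ 2 := by
    rw [mul_sum, sum_div]
    exact sum_congr rfl fun n _ => by ring
  rw [abs_le, ← hbound]
  constructor <;> linarith [le_abs_self (∑ n, q n * Vstarn n s - VI s),
    neg_abs_le (∑ n, q n * VstarIn n s - VIstar s)]

theorem stmt15 (N : ℕ) (γ Rmax : ℝ) (hγ0 : 0 < γ) (hγ1 : γ < 1)
    (R : S → A → ℝ) (hR : ∀ s a, 0 ≤ R s a ∧ R s a ≤ Rmax)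
    (q : Fin N → ℝ) (hq0 : ∀ n, 0 ≤ q n) (hq1 : ∑ n, q n = 1)
    (P : Fin N → S → A → S → ℝ) (hP : ∀ n, IsKernel (P n))
    (Pbar : S → A → S → ℝ) (hPbar : ∀ s a s', Pbar s a s' = ∑ j, q j * P j s a s')
    (μ : S → ℝ) (hμ0 : ∀ s, 0 ≤ μ s) (hμ1 : ∑ s, μ s = 1)
    -- π*, the optimal policy for the FRL objective η(π) = E_{s₀∼μ}[V̄^π(s₀)]
    (pistar : S → A → ℝ) (hpistar : IsPolicy pistar)
    (Vstarn : Fin N → S → ℝ)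
    (hVstarn : ∀ n s, Vstarn n s = Tpol γ R (P n) pistar (Vstarn n) s)
    (hopt : ∀ pi' : S → A → ℝ, IsPolicy pi' → ∀ W : Fin N → S → ℝ,
      (∀ n s, W n s = Tpol γ R (P n) pi' (W n) s) →
      ∑ s, μ s * ∑ n, q n * W n s ≤ ∑ s, μ s * ∑ n, q n * Vstarn n s)
    -- π*_I, the optimal policy of the imaginary MDP
    (pistarI : S → A → ℝ) (hpistarI : IsPolicy pistarI)
    (VIstar : S → ℝ) (hVIstar : ∀ s, VIstar s = Tpol γ R Pbar pistarI VIstar s)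
    (hVIstarOpt : ∀ s, VIstar s = Topt γ R Pbar VIstar s)
    (VstarIn : Fin N → S → ℝ)
    (hVstarIn : ∀ n s, VstarIn n s = Tpol γ R (P n) pistarI (VstarIn n) s)
    (s : S) (hs : ∑ n, q n * VstarIn n s ≤ ∑ n, q n * Vstarn n s) :
    |VIstar s - ∑ n, q n * Vstarn n s| ≤
      γ * Rmax * (∑ n, q n * kappa (P n) Pbar) / (1 - γ) ^ 2 :=
  stmt15_general N γ Rmax hγ0 hγ1 R hR q hq0 hq1 P hP Pbar hPbar pistar hpistar Vstarn hVstarn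
    pistarI hpistarI VIstar hVIstar hVIstarOpt VstarIn hVstarIn s hs
end
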